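/- arXiv:1004.0269 — 3 statements merged into one kernel-verified Lean document; each statement's English description precedes it below -/
import Mathlib

section
/- Let A_y ≥ A_z > 0 and λ_y, λ_z > 0 satisfy λ_y A_z ≤ λ_z A_y, with at least one of the inequalities A_y ≥ A_z, λ_y A_z ≤ λ_z A_y strict. Let α* ∈ [0,1] be a point satisfying the first-order condition K'(α*) = K(1) − K(0), and define C_s := α*(A_y − A_z) + λ_y ln λ_y − λ_z ln λ_z + λ_z ln(A_z α* + λ_z) − λ_y ln(A_y α* + λ_y). Then for every probability measure μ on ℝ concentrated on the interval [0,1], one has ∫ K dμ − K(∫ x dμ(x)) ≤ C_s, and equality holds for the two-point measure μ = α* δ_1 + (1 − α*) δ_0. -/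
/-!
`K` is convex on `[0, ∞)`: its second derivative
`A_y² / (A_y x + λ_y) - A_z² / (A_z x + λ_z)` is nonnegative there because `A_z ≤ A_y` and
`λ_y A_z ≤ λ_z A_y`. For a probability measure `μ` on `[0, 1]` with mean `m`, convexity bounds
`∫ K dμ` above by the chord `K 0 + (K 1 - K 0) m` and bounds `K m` below by the tangent at `α*`,
whose slope is also `K 1 - K 0`. Hence `∫ K dμ - K m ≤ K 0 + (K 1 - K 0) α* - K α* = C_s`,
independently of `μ`; the two-point measure at `0` and `1` with mean `α*` lies on the chord and
attains the bound.
-/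

open MeasureTheory Set Real

namespace ConvexOn

variable {S : Set ℝ} {f : ℝ → ℝ} {f' a x : ℝ}

theorem add_mul_sub_le_of_hasDerivAt (hf : ConvexOn ℝ S f) (ha : a ∈ S) (hx : x ∈ S)
    (hfa : HasDerivAt f f' a) : f a + f' * (x - a) ≤ f x := by
  rcases lt_trichotomy a x with hax | rfl | hxa
  · have h := hf.le_slope_of_hasDerivAt ha hx hax hfa
    rw [slope_def_field, le_div_iff₀ (sub_pos.2 hax)] at h
    linarith
  · simp
  · have h := hf.slope_le_of_hasDerivAt hx ha hxa hfa
    rw [slope_def_field, div_le_iff₀ (sub_pos.2 hxa)] at h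
    linarith

theorem le_add_mul_of_mem_Icc_zero_one (hf : ConvexOn ℝ (Icc 0 1) f) (hx : x ∈ Icc 0 1) :
    f x ≤ f 0 + (f 1 - f 0) * x := by
  have h := hf.2 (left_mem_Icc.2 zero_le_one) (right_mem_Icc.2 zero_le_one)
    (sub_nonneg.2 hx.2) hx.1 (sub_add_cancel 1 x)
  simp only [smul_eq_mul, mul_zero, mul_one, zero_add] at h
  linarith

end ConvexOn

section TwoPoint

variable {α E : Type*} [MeasurableSpace α] [MeasurableSingletonClass α]
  [NormedAddCommGroup E] [NormedSpace ℝ E] [CompleteSpace E]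

theorem integral_smul_dirac_add_smul_dirac {p q : ℝ} (hp : 0 ≤ p) (hq : 0 ≤ q) (a b : α)
    (f : α → E) :
    ∫ x, f x ∂(ENNReal.ofReal p • Measure.dirac a + ENNReal.ofReal q • Measure.dirac b)
      = p • f a + q • f b := by
  rw [integral_add_measure
      ((integrable_dirac enorm_lt_top).smul_measure ENNReal.ofReal_ne_top)
      ((integrable_dirac enorm_lt_top).smul_measure ENNReal.ofReal_ne_top),
    integral_smul_measure, integral_smul_measure, integral_dirac, integral_dirac,
    ENNReal.toReal_ofReal hp, ENNReal.toReal_ofReal hq]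

end TwoPoint

section UnitInterval

variable {μ : Measure ℝ} [IsProbabilityMeasure μ] {f : ℝ → ℝ}

theorem integrable_of_ae_mem_Icc_zero_one (hμ : ∀ᵐ x ∂μ, x ∈ Icc (0 : ℝ) 1)
    (hf : ContinuousOn f (Icc 0 1)) : Integrable f μ := by
  have h := hf.integrableOn_Icc (μ := μ)
  rwa [IntegrableOn, Measure.restrict_eq_self_of_ae_mem hμ] at h

theorem integral_le_of_convexOn_Icc_zero_one (hμ : ∀ᵐ x ∂μ, x ∈ Icc (0 : ℝ) 1)
    (hf : ConvexOn ℝ (Icc 0 1) f) (hfc : ContinuousOn f (Icc 0 1)) :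
    ∫ x, f x ∂μ ≤ f 0 + (f 1 - f 0) * ∫ x, x ∂μ := by
  have hid : Integrable (fun x : ℝ => x) μ :=
    integrable_of_ae_mem_Icc_zero_one hμ continuousOn_id
  calc ∫ x, f x ∂μ ≤ ∫ x, (f 0 + (f 1 - f 0) * x) ∂μ :=
        integral_mono_ae (integrable_of_ae_mem_Icc_zero_one hμ hfc)
          ((integrable_const _).add (hid.const_mul _))
          (hμ.mono fun x hx => hf.le_add_mul_of_mem_Icc_zero_one hx)
    _ = f 0 + (f 1 - f 0) * ∫ x, x ∂μ := by
        rw [integral_add (integrable_const _) (hid.const_mul _), integral_const_mul,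
          integral_const, probReal_univ, one_smul]

theorem integral_sub_map_integral_le_of_convexOn_Icc_zero_one
    (hμ : ∀ᵐ x ∂μ, x ∈ Icc (0 : ℝ) 1) (hf : ConvexOn ℝ (Icc 0 1) f)
    (hfc : ContinuousOn f (Icc 0 1)) {a : ℝ} (ha : a ∈ Icc (0 : ℝ) 1)
    (hfa : HasDerivAt f (f 1 - f 0) a) :
    ∫ x, f x ∂μ - f (∫ x, x ∂μ) ≤ f 0 + (f 1 - f 0) * a - f a := by
  have hmean : ∫ x, x ∂μ ∈ Icc (0 : ℝ) 1 :=
    (convex_Icc 0 1).integral_mem isClosed_Icc hμ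
      (integrable_of_ae_mem_Icc_zero_one hμ continuousOn_id)
  have hchord := integral_le_of_convexOn_Icc_zero_one hμ hf hfc
  have htangent := hf.add_mul_sub_le_of_hasDerivAt ha hmean hfa
  linarith

end UnitInterval

theorem hasDerivAt_mul_log_affine {A l x : ℝ} (h : A * x + l ≠ 0) :
    HasDerivAt (fun t => (A * t + l) * log (A * t + l)) (A * (log (A * x + l) + 1)) x := by
  have haff : HasDerivAt (fun t => A * t + l) A x := by
    simpa using ((hasDerivAt_id x).const_mul A).add_const l
  refine ((hasDerivAt_mul_log h).comp x haff).congr_deriv ?_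
  ring

theorem hasDerivAt_mul_log_affine_add_one {A l x : ℝ} (h : A * x + l ≠ 0) :
    HasDerivAt (fun t => A * (log (A * t + l) + 1)) (A * A / (A * x + l)) x := by
  have haff : HasDerivAt (fun t => A * t + l) A x := by
    simpa using ((hasDerivAt_id x).const_mul A).add_const l
  refine ((((hasDerivAt_log h).comp x haff).add_const 1).const_mul A).congr_deriv ?_
  ring

theorem convexOn_Ici_mul_log_affine_sub {Ay Az ly lz : ℝ} (hAz : 0 < Az) (hAyz : Az ≤ Ay)
    (hly : 0 ≤ ly) (hlz : 0 ≤ lz) (hdeg : ly * Az ≤ lz * Ay) :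
    ConvexOn ℝ (Ici 0) fun x =>
      (Ay * x + ly) * log (Ay * x + ly) - (Az * x + lz) * log (Az * x + lz) := by
  have hpos : ∀ x ∈ interior (Ici (0 : ℝ)), 0 < Ay * x + ly ∧ 0 < Az * x + lz := by
    intro x hx
    rw [interior_Ici, mem_Ioi] at hx
    constructor <;> nlinarith
  refine convexOn_of_hasDerivWithinAt2_nonneg (convex_Ici 0)
    (f' := fun x => Ay * (log (Ay * x + ly) + 1) - Az * (log (Az * x + lz) + 1))
    (f'' := fun x => Ay * Ay / (Ay * x + ly) - Az * Az / (Az * x + lz))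
    (by fun_prop) (fun x hx => ?_) (fun x hx => ?_) (fun x hx => ?_)
  · exact ((hasDerivAt_mul_log_affine (hpos x hx).1.ne').sub
      (hasDerivAt_mul_log_affine (hpos x hx).2.ne')).hasDerivWithinAt
  · exact ((hasDerivAt_mul_log_affine_add_one (hpos x hx).1.ne').sub
      (hasDerivAt_mul_log_affine_add_one (hpos x hx).2.ne')).hasDerivWithinAt
  · obtain ⟨hy, hz⟩ := hpos x hx
    rw [interior_Ici, mem_Ioi] at hx
    rw [sub_nonneg, div_le_div_iff₀ hz hy]
    -- `Ay² (Az x + lz) - Az² (Ay x + ly) = Ay Az (Ay - Az) x + (Ay² lz - Az² ly)`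
    have hdeg' : Az * Az * ly ≤ Ay * Ay * lz := by
      nlinarith [mul_le_mul_of_nonneg_left hdeg hAz.le, mul_nonneg hlz (sub_nonneg.2 hAyz)]
    nlinarith [mul_nonneg (mul_nonneg (mul_nonneg hAz.le (hAz.le.trans hAyz)) hx.le)
      (sub_nonneg.2 hAyz)]

theorem poisson_wiretap_secrecy_capacity_extremal_general
    (Ay Az ly lz : ℝ) (hAz : 0 < Az) (hAyz : Az ≤ Ay)
    (hly : 0 < ly) (hlz : 0 < lz) (hdeg : ly * Az ≤ lz * Ay)
    (K : ℝ → ℝ)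
    (hK : K = fun x => (Ay * x + ly) * Real.log (Ay * x + ly)
        - (Az * x + lz) * Real.log (Az * x + lz))
    (αs : ℝ) (hαs : αs ∈ Set.Icc (0:ℝ) 1)
    (hfoc : deriv K αs = K 1 - K 0)
    (Cs : ℝ)
    (hCs : Cs = αs * (Ay - Az) + ly * Real.log ly - lz * Real.log lz
        + lz * Real.log (Az * αs + lz) - ly * Real.log (Ay * αs + ly)) :
    (∀ μ : Measure ℝ, IsProbabilityMeasure μ → μ (Set.Icc (0:ℝ) 1)ᶜ = 0 →
      (∫ x, K x ∂μ) - K (∫ x, x ∂μ) ≤ Cs) ∧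
    ((∫ x, K x ∂(ENNReal.ofReal αs • Measure.dirac (1:ℝ)
          + ENNReal.ofReal (1 - αs) • Measure.dirac (0:ℝ)))
      - K (∫ x, x ∂(ENNReal.ofReal αs • Measure.dirac (1:ℝ)
          + ENNReal.ofReal (1 - αs) • Measure.dirac (0:ℝ))) = Cs) := by
  have hderiv : HasDerivAt K
      (Ay * (log (Ay * αs + ly) + 1) - Az * (log (Az * αs + lz) + 1)) αs := by
    subst hK
    exact (hasDerivAt_mul_log_affine (by nlinarith [hαs.1])).sub
      (hasDerivAt_mul_log_affine (by nlinarith [hαs.1]))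
  have hconv : ConvexOn ℝ (Icc 0 1) K := hK ▸
    (convexOn_Ici_mul_log_affine_sub hAz hAyz hly.le hlz.le hdeg).subset Icc_subset_Ici_self
      (convex_Icc 0 1)
  have hcont : Continuous K := by subst hK; fun_prop
  have hslope : HasDerivAt K (K 1 - K 0) αs := hfoc ▸ hderiv.differentiableAt.hasDerivAt
  have hgap : K 0 + (K 1 - K 0) * αs - K αs = Cs := by
    rw [← hfoc, hderiv.deriv, hCs, hK]
    simp only [mul_zero, zero_add]
    ring
  refine ⟨fun μ _ hμ => hgap ▸ integral_sub_map_integral_le_of_convexOn_Icc_zero_one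
    (mem_ae_iff.2 hμ) hconv hcont.continuousOn hαs hslope, ?_⟩
  rw [integral_smul_dirac_add_smul_dirac hαs.1 (sub_nonneg.2 hαs.2),
    integral_smul_dirac_add_smul_dirac hαs.1 (sub_nonneg.2 hαs.2)]
  simp only [smul_eq_mul, mul_one, mul_zero, add_zero]
  linarith

/-- The analytic core of the secrecy-capacity converse for the degraded Poisson
wiretap channel: `∫ K dμ − K(∫ x dμ)` is at most `C_s` for every probability
measure `μ` on `[0,1]`, with equality for the two-point measure
`α* δ_1 + (1 − α*) δ_0`. -/
theorem poisson_wiretap_secrecy_capacity_extremal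
    (Ay Az ly lz : ℝ) (hAz : 0 < Az) (hAyz : Az ≤ Ay)
    (hly : 0 < ly) (hlz : 0 < lz) (hdeg : ly * Az ≤ lz * Ay)
    (hstrict : Az < Ay ∨ ly * Az < lz * Ay)
    (K : ℝ → ℝ)
    (hK : K = fun x => (Ay * x + ly) * Real.log (Ay * x + ly)
        - (Az * x + lz) * Real.log (Az * x + lz))
    (αs : ℝ) (hαs : αs ∈ Set.Icc (0:ℝ) 1)
    (hfoc : deriv K αs = K 1 - K 0)
    (Cs : ℝ)
    (hCs : Cs = αs * (Ay - Az) + ly * Real.log ly - lz * Real.log lz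
        + lz * Real.log (Az * αs + lz) - ly * Real.log (Ay * αs + ly)) :
    (∀ μ : Measure ℝ, IsProbabilityMeasure μ → μ (Set.Icc (0:ℝ) 1)ᶜ = 0 →
      (∫ x, K x ∂μ) - K (∫ x, x ∂μ) ≤ Cs) ∧
    ((∫ x, K x ∂(ENNReal.ofReal αs • Measure.dirac (1:ℝ)
          + ENNReal.ofReal (1 - αs) • Measure.dirac (0:ℝ)))
      - K (∫ x, x ∂(ENNReal.ofReal αs • Measure.dirac (1:ℝ)
          + ENNReal.ofReal (1 - αs) • Measure.dirac (0:ℝ))) = Cs) :=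
  poisson_wiretap_secrecy_capacity_extremal_general Ay Az ly lz hAz hAyz hly hlz hdeg K hK αs hαs
    hfoc Cs hCs
end

section
/- Let A_y, A_z > 0 and λ_y, λ_z ≥ 0 satisfy λ_y A_z ≤ λ_z A_y. Then the function π(x) = (A_y x + λ_y) ln(A_y x + λ_y) − (A_y/A_z) · (A_z x + λ_z) ln(A_z x + λ_z) is convex on the interval [0,1]. -/
/-!
With `u = A_y x + λ_y` and `v = A_z x + λ_z`, the `+1` terms in the derivatives of `u ln u` and
`(A_y/A_z) v ln v` cancel, so `π' = A_y (ln u − ln v)` and `π'' = A_y (A_y/u − A_z/v)`.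
This is nonnegative because `A_z u − A_y v = λ_y A_z − λ_z A_y ≤ 0`.
-/

open Real Set

lemma hasDerivAt_affine (a b x : ℝ) : HasDerivAt (fun x => a * x + b) a x := by
  simpa using ((hasDerivAt_id x).const_mul a).add_const b

lemma hasDerivAt_affine_mul_log {a b x : ℝ} (h : a * x + b ≠ 0) :
    HasDerivAt (fun x => (a * x + b) * log (a * x + b)) (a * (log (a * x + b) + 1)) x := by
  have hcomp := (hasDerivAt_mul_log h).comp x (hasDerivAt_affine a b x)
  exact hcomp.congr_deriv (mul_comm _ _)

lemma hasDerivAt_log_affine {a b x : ℝ} (h : a * x + b ≠ 0) :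
    HasDerivAt (fun x => log (a * x + b)) (a / (a * x + b)) x :=
  (hasDerivAt_affine a b x).log h

lemma div_affine_le_div_affine {Ay Az ly lz x : ℝ} (hu : 0 < Ay * x + ly)
    (hv : 0 < Az * x + lz) (hdeg : ly * Az ≤ lz * Ay) :
    Az / (Az * x + lz) ≤ Ay / (Ay * x + ly) := by
  rw [div_le_div_iff₀ hv hu]
  linarith

theorem convexOn_Ici_affine_mul_log_sub {Ay Az ly lz : ℝ} (hAy : 0 < Ay) (hAz : 0 < Az)
    (hly : 0 ≤ ly) (hlz : 0 ≤ lz) (hdeg : ly * Az ≤ lz * Ay) :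
    ConvexOn ℝ (Ici 0) (fun x => (Ay * x + ly) * log (Ay * x + ly)
      - (Ay / Az) * ((Az * x + lz) * log (Az * x + lz))) := by
  have hu : ∀ x ∈ Ioi (0 : ℝ), 0 < Ay * x + ly := fun x hx => by
    have := mul_pos hAy hx; linarith
  have hv : ∀ x ∈ Ioi (0 : ℝ), 0 < Az * x + lz := fun x hx => by
    have := mul_pos hAz hx; linarith
  refine convexOn_of_hasDerivWithinAt2_nonneg (convex_Ici 0) (by fun_prop)
    (f' := fun x => Ay * (log (Ay * x + ly) - log (Az * x + lz)))
    (f'' := fun x => Ay * (Ay / (Ay * x + ly) - Az / (Az * x + lz))) ?_ ?_ ?_ <;>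
    simp only [interior_Ici] <;> intro x hx
  · have hcancel : Ay * (log (Ay * x + ly) + 1) - Ay / Az * (Az * (log (Az * x + lz) + 1))
        = Ay * (log (Ay * x + ly) - log (Az * x + lz)) := by
      field_simp
      ring
    exact (hcancel ▸ (hasDerivAt_affine_mul_log (hu x hx).ne').fun_sub
      ((hasDerivAt_affine_mul_log (hv x hx).ne').const_mul (Ay / Az))).hasDerivWithinAt
  · exact (((hasDerivAt_log_affine (hu x hx).ne').sub
      (hasDerivAt_log_affine (hv x hx).ne')).const_mul Ay).hasDerivWithinAt
  · exact mul_nonneg hAy.le (sub_nonneg.2 (div_affine_le_div_affine (hu x hx) (hv x hx) hdeg))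

/-- Under the degradedness condition `λ_y A_z ≤ λ_z A_y`, the function
`π(x) = (A_y x + λ_y) ln(A_y x + λ_y) − (A_y/A_z)(A_z x + λ_z) ln(A_z x + λ_z)`
is convex on `[0,1]`. -/
theorem poisson_wiretap_pi_convexOn
    (Ay Az ly lz : ℝ) (hAy : 0 < Ay) (hAz : 0 < Az)
    (hly : 0 ≤ ly) (hlz : 0 ≤ lz) (hdeg : ly * Az ≤ lz * Ay) :
    ConvexOn ℝ (Set.Icc (0:ℝ) 1)
      (fun x => (Ay * x + ly) * Real.log (Ay * x + ly)
        - (Ay / Az) * ((Az * x + lz) * Real.log (Az * x + lz))) :=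
  (convexOn_Ici_affine_mul_log_sub hAy hAz hly hlz hdeg).subset Icc_subset_Ici_self
    (convex_Icc 0 1)
end

section
/- Let A_y > A_z > 0 and σ > 0, and set λ_y = σ A_y and λ_z = σ A_z. Let K(x) = (A_y x + λ_y) ln(A_y x + λ_y) − (A_z x + λ_z) ln(A_z x + λ_z), and put α* = (1+σ)^{1+σ}/(e · σ^σ) − σ. Then α* ∈ (0,1), α* satisfies K'(α*) = K(1) − K(0), and α* K(1) + (1 − α*) K(0) − K(α*) = (λ_y − λ_z) · ( (1/e)(1 + 1/σ)^{1+σ} − (1+σ) ln(1 + 1/σ) ). -/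
/-!
With `λ_u = σ A_u` we have `φ_u(x) = A_u g(x + σ) + (A_u ln A_u)(x + σ)` for `g(t) = t ln t`, so
`K = (A_y - A_z) g(· + σ) + affine`. The affine part drops out of both the first-order condition
and the gap `α K(1) + (1 - α) K(0) - K(α)`, leaving a statement about `g` on `[σ, 1 + σ]`:
`t = α* + σ` is the point where `g'(t) = ln t + 1` equals the chord slope
`(1 + σ) ln(1 + σ) - σ ln σ`. By the mean value theorem and injectivity of `ln`, `t` lies strictly
between `σ` and `1 + σ`, and substituting `ln t` into the gap of `g` gives the closed form.
-/
open Real Set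

lemma Real.mul_log_mul (a x : ℝ) : a * x * log (a * x) = a * (x * log x) + a * log a * x := by
  rcases eq_or_ne a 0 with rfl | ha
  · simp
  rcases eq_or_ne x 0 with rfl | hx
  · simp
  rw [log_mul ha hx]
  ring

lemma Real.log_rpow_self_div_exp_mul_rpow_self {a b : ℝ} (ha : 0 < a) (hb : 0 < b) :
    log (a ^ a / (exp 1 * b ^ b)) + 1 = a * log a - b * log b := by
  rw [log_div (by positivity) (by positivity), log_mul (exp_ne_zero 1) (by positivity),
    log_exp, log_rpow ha, log_rpow hb]
  ring

lemma Real.mem_Ioo_of_log_add_one_eq_slope {a b t : ℝ} (ha : 0 < a) (hab : a < b) (ht : 0 < t)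
    (h : log t + 1 = (b * log b - a * log a) / (b - a)) : t ∈ Ioo a b := by
  obtain ⟨c, hc, hc_slope⟩ := exists_hasDerivAt_eq_slope (fun x => x * log x) (fun x => log x + 1)
    hab (continuousOn_id.mul (continuousOn_log.mono fun x hx => (ha.trans_le hx.1).ne'))
    fun x hx => hasDerivAt_mul_log (ha.trans hx.1).ne'
  have htc : t = c := log_injOn_pos ht (ha.trans hc.1) (by linarith)
  exact htc ▸ hc

lemma Real.jensen_gap_mul_log_of_log_add_one_eq_slope {a t : ℝ} (ha : 0 < a)
    (ht : log t + 1 = (1 + a) * log (1 + a) - a * log a) :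
    (t - a) * ((1 + a) * log (1 + a)) + (1 - (t - a)) * (a * log a) - t * log t
      = t - a * (1 + a) * log (1 + 1 / a) := by
  rw [show 1 + 1 / a = (1 + a) / a by field_simp; ring, log_div (by positivity) ha.ne',
    show log t = (1 + a) * log (1 + a) - a * log a - 1 by linarith]
  ring

lemma Real.mul_one_div_exp_mul_one_add_one_div_rpow {a : ℝ} (ha : 0 < a) :
    a * (1 / exp 1 * (1 + 1 / a) ^ (1 + a)) = (1 + a) ^ (1 + a) / (exp 1 * a ^ a) := by
  rw [show 1 + 1 / a = (1 + a) / a by field_simp; ring, div_rpow (by positivity) ha.le,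
    rpow_add ha, rpow_one]
  field_simp

theorem poisson_wiretap_worst_case_general
    (Ay Az σ : ℝ) (hσ : 0 < σ)
    (ly lz : ℝ) (hly : ly = σ * Ay) (hlz : lz = σ * Az)
    (K : ℝ → ℝ)
    (hK : K = fun x => (Ay * x + ly) * Real.log (Ay * x + ly)
        - (Az * x + lz) * Real.log (Az * x + lz))
    (αs : ℝ)
    (hαs : αs = (1 + σ) ^ (1 + σ) / (Real.exp 1 * σ ^ σ) - σ) :
    αs ∈ Set.Ioo (0:ℝ) 1 ∧
    deriv K αs = K 1 - K 0 ∧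
    αs * K 1 + (1 - αs) * K 0 - K αs
      = (ly - lz) * ((1 / Real.exp 1) * (1 + 1 / σ) ^ (1 + σ)
          - (1 + σ) * Real.log (1 + 1 / σ)) := by
  set t := (1 + σ) ^ (1 + σ) / (exp 1 * σ ^ σ)
  have ht_slope : log t + 1 = (1 + σ) * log (1 + σ) - σ * log σ :=
    log_rpow_self_div_exp_mul_rpow_self (by positivity) hσ
  have ht : t ∈ Ioo σ (1 + σ) :=
    mem_Ioo_of_log_add_one_eq_slope hσ (by linarith) (by positivity) (by simpa using ht_slope)
  have hK' : K = fun x => (Ay - Az) * ((x + σ) * log (x + σ))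
      + (Ay * log Ay - Az * log Az) * (x + σ) := by
    funext x
    have key (A : ℝ) : (A * x + σ * A) * log (A * x + σ * A)
        = A * ((x + σ) * log (x + σ)) + A * log A * (x + σ) := by
      rw [show A * x + σ * A = A * (x + σ) by ring, mul_log_mul]
    simp only [hK, hly, hlz, key]
    ring
  have hderiv : deriv K αs = (Ay - Az) * (log t + 1) + (Ay * log Ay - Az * log Az) := by
    have hαt : αs + σ = t := by rw [hαs]; ring
    have hmul_log := (hasDerivAt_mul_log (hαt ▸ (hσ.trans ht.1).ne')).comp_add_const αs σ
    rw [hK', ← hαt]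
    exact ((hmul_log.const_mul _).add (((hasDerivAt_id αs).add_const σ).const_mul _)).deriv.trans
      (by ring)
  refine ⟨⟨by linarith [ht.1], by linarith [ht.2]⟩, ?_, ?_⟩
  · rw [hderiv, ht_slope, hK']
    simp only [zero_add]
    ring
  · have hgap := jensen_gap_mul_log_of_log_add_one_eq_slope hσ ht_slope
    rw [hK', hly, hlz, hαs]
    simp only [sub_add_cancel, zero_add]
    linear_combination (Ay - Az) * hgap - (Ay - Az) * mul_one_div_exp_mul_one_add_one_div_rpow hσ

/-- The worst case scenario `λ_y/A_y = λ_z/A_z = σ`: the optimal duty cycle is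
`α* = (1+σ)^{1+σ}/(e σ^σ) − σ ∈ (0,1)`, it satisfies the first-order condition,
and the resulting secrecy capacity is
`(λ_y − λ_z)((1/e)(1 + 1/σ)^{1+σ} − (1+σ) ln(1 + 1/σ))`. -/
theorem poisson_wiretap_worst_case
    (Ay Az σ : ℝ) (hAz : 0 < Az) (hAyz : Az < Ay) (hσ : 0 < σ)
    (ly lz : ℝ) (hly : ly = σ * Ay) (hlz : lz = σ * Az)
    (K : ℝ → ℝ)
    (hK : K = fun x => (Ay * x + ly) * Real.log (Ay * x + ly)
        - (Az * x + lz) * Real.log (Az * x + lz))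
    (αs : ℝ)
    (hαs : αs = (1 + σ) ^ (1 + σ) / (Real.exp 1 * σ ^ σ) - σ) :
    αs ∈ Set.Ioo (0:ℝ) 1 ∧
    deriv K αs = K 1 - K 0 ∧
    αs * K 1 + (1 - αs) * K 0 - K αs
      = (ly - lz) * ((1 / Real.exp 1) * (1 + 1 / σ) ^ (1 + σ)
          - (1 + σ) * Real.log (1 + 1 / σ)) :=
  poisson_wiretap_worst_case_general Ay Az σ hσ ly lz hly hlz K hK αs hαs
end
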